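/- Let K, L be compact Hausdorff spaces, with complex scalars, and let T : C(L) → C(K) be a linear operator with ‖T‖ ≤ 1 such that for every pair (s, t) ∈ L × L there exist points r_{s,t}, r̃_{s,t} ∈ K with Tf(r_{s,t}) = (1/2)(f(s) + f(t)) and Tf(r̃_{s,t}) = (1/2)(f(s) + i·f(t)) for every f ∈ C(L). Then T is a linear isometric embedding and T(C(L)) does SPR in C(K). -/

import Mathlib

noncomputable section

/-- The pointwise modulus of a continuous function, as a real-valued continuous function. -/
def cmAbs {K : Type*} [TopologicalSpace K] {𝕜 : Type*} [RCLike 𝕜]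
    (f : C(K, 𝕜)) : C(K, ℝ) :=
  ⟨fun x => ‖f x‖, (map_continuous f).norm⟩

/-- `inf_{‖λ‖ = 1} ‖f - λ • g‖`. -/
def sprInf {K : Type*} [TopologicalSpace K] [CompactSpace K] {𝕜 : Type*} [RCLike 𝕜]
    (f g : C(K, 𝕜)) : ℝ :=
  ⨅ l : {c : 𝕜 // ‖c‖ = 1}, ‖f - (l : 𝕜) • g‖

/-- A subspace `E ⊆ C(K, 𝕜)` does `C`-stable phase retrieval. -/
def DoesCSPR {K : Type*} [TopologicalSpace K] [CompactSpace K] {𝕜 : Type*} [RCLike 𝕜]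
    (E : Submodule 𝕜 C(K, 𝕜)) (C : ℝ) : Prop :=
  ∀ f ∈ E, ∀ g ∈ E, sprInf f g ≤ C * ‖cmAbs f - cmAbs g‖

/-- A subspace `E ⊆ C(K, 𝕜)` does stable phase retrieval. -/
def DoesSPR {K : Type*} [TopologicalSpace K] [CompactSpace K] {𝕜 : Type*} [RCLike 𝕜]
    (E : Submodule 𝕜 C(K, 𝕜)) : Prop :=
  ∃ C : ℝ, 1 ≤ C ∧ DoesCSPR E C

/-!
Evaluating at `r_{s,s}` shows that `T` is isometric. The points `r` and `r'` make `|Tf|` determine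
`|f s + f t|` and `|f s + i f t|` for all `s, t`, and by polarization these determine the products
`f t * conj (f s)`. If `|Tf|` and `|Tg|` are `δ`-close and `‖g‖ ≤ ‖f‖`, then `f t * conj (f s₀)`
and `g t * conj (g s₀)` are `O(‖f‖ δ)`-close; taking `s₀` where `|f|` attains its maximum and
dividing by `conj (f s₀)` recovers `f` from `g` up to a unimodular scalar and an error `O(δ)`.
-/

open ComplexConjugate Complex

lemma abs_sq_sub_sq_le {x y m e : ℝ} (hx : 0 ≤ x) (hy : 0 ≤ y) (hxm : x ≤ m) (hym : y ≤ m)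
    (hxy : |x - y| ≤ e) : |x ^ 2 - y ^ 2| ≤ 2 * m * e := by
  rw [sq_sub_sq, abs_mul, abs_of_nonneg (add_nonneg hx hy)]
  exact mul_le_mul (by linarith) hxy (abs_nonneg _) (by linarith)

lemma Complex.sq_norm_add (x y : ℂ) :
    ‖x + y‖ ^ 2 = ‖x‖ ^ 2 + ‖y‖ ^ 2 + 2 * (x * conj y).re := by
  simp only [← normSq_eq_norm_sq, normSq_add]

lemma Complex.sq_norm_add_I_mul (x y : ℂ) :
    ‖x + I * y‖ ^ 2 = ‖x‖ ^ 2 + ‖y‖ ^ 2 + 2 * (x * conj y).im := by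
  rw [sq_norm_add, norm_mul, norm_I, one_mul]
  simp only [map_mul, conj_I, mul_re, mul_im, conj_re, conj_im, neg_re, neg_im, I_re, I_im]
  ring

/-- Polarization with error terms. -/
theorem Complex.norm_mul_conj_sub_mul_conj_le {a b c d : ℂ} {M δ : ℝ}
    (ha : ‖a‖ ≤ M) (hb : ‖b‖ ≤ M) (hc : ‖c‖ ≤ M) (hd : ‖d‖ ≤ M)
    (hac : |‖a‖ - ‖c‖| ≤ δ) (hbd : |‖b‖ - ‖d‖| ≤ δ)
    (hadd : |‖a + b‖ - ‖c + d‖| ≤ 2 * δ) (haddI : |‖a + I * b‖ - ‖c + I * d‖| ≤ 2 * δ) :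
    ‖a * conj b - c * conj d‖ ≤ 12 * M * δ := by
  have hsq_ac := abs_sq_sub_sq_le (norm_nonneg a) (norm_nonneg c) ha hc hac
  have hsq_bd := abs_sq_sub_sq_le (norm_nonneg b) (norm_nonneg d) hb hd hbd
  have hsq_add := abs_sq_sub_sq_le (m := 2 * M) (norm_nonneg _) (norm_nonneg _)
    ((norm_add_le a b).trans (by linarith)) ((norm_add_le c d).trans (by linarith)) hadd
  have hsq_addI := abs_sq_sub_sq_le (m := 2 * M) (norm_nonneg _) (norm_nonneg _)
    ((norm_add_le _ _).trans (by rw [norm_mul, norm_I, one_mul]; linarith))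
    ((norm_add_le _ _).trans (by rw [norm_mul, norm_I, one_mul]; linarith)) haddI
  have hre : |(a * conj b).re - (c * conj d).re| ≤ 6 * M * δ := by
    have hab := sq_norm_add a b
    have hcd := sq_norm_add c d
    rw [abs_le] at hsq_ac hsq_bd hsq_add ⊢
    constructor <;> linarith
  have him : |(a * conj b).im - (c * conj d).im| ≤ 6 * M * δ := by
    have hab := sq_norm_add_I_mul a b
    have hcd := sq_norm_add_I_mul c d
    rw [abs_le] at hsq_ac hsq_bd hsq_addI ⊢
    constructor <;> linarith
  calc ‖a * conj b - c * conj d‖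
      ≤ |(a * conj b - c * conj d).re| + |(a * conj b - c * conj d).im| :=
        norm_le_abs_re_add_abs_im _
    _ ≤ 6 * M * δ + 6 * M * δ := by rw [sub_re, sub_im]; exact add_le_add hre him
    _ = 12 * M * δ := by ring

/-- Rotating `a` onto the ray of `b`. -/
theorem RCLike.exists_norm_eq_one_norm_mul_sub_eq {𝕜 : Type*} [RCLike 𝕜] (a b : 𝕜) :
    ∃ l : 𝕜, ‖l‖ = 1 ∧ ‖l * a - b‖ = |‖a‖ - ‖b‖| := by
  obtain ⟨c, hc, hca⟩ := RCLike.exists_norm_eq_mul_self a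
  obtain ⟨d, hd, hdb⟩ := RCLike.exists_norm_eq_mul_self b
  have hd0 : d ≠ 0 := norm_ne_zero_iff.mp (by rw [hd]; exact one_ne_zero)
  have hrot : c / d * a - b = ((‖a‖ - ‖b‖ : ℝ) : 𝕜) / d := by
    rw [RCLike.ofReal_sub, hca, hdb]
    field_simp
  refine ⟨c / d, by rw [norm_div, hc, hd, div_one], ?_⟩
  rw [hrot, norm_div, hd, div_one, RCLike.norm_ofReal]

theorem ContinuousMap.exists_norm_apply_eq_norm {α E : Type*} [TopologicalSpace α]
    [CompactSpace α] [Nonempty α] [NormedAddCommGroup E] (f : C(α, E)) :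
    ∃ x, ‖f x‖ = ‖f‖ := by
  obtain ⟨x, -, hx⟩ := isCompact_univ.exists_isMaxOn Set.univ_nonempty
    (map_continuous f).norm.continuousOn
  exact ⟨x, le_antisymm (f.norm_coe_le_norm x)
    ((f.norm_le (norm_nonneg _)).2 fun y => hx (Set.mem_univ y))⟩

theorem sprInf_le_of_norm_sub_smul_le {K : Type*} [TopologicalSpace K] [CompactSpace K]
    {𝕜 : Type*} [RCLike 𝕜] {f g : C(K, 𝕜)} {l : 𝕜} {c : ℝ} (hl : ‖l‖ = 1)
    (hfg : ‖f - l • g‖ ≤ c) : sprInf f g ≤ c := by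
  have hbdd : BddBelow (Set.range fun l : {c : 𝕜 // ‖c‖ = 1} => ‖f - (l : 𝕜) • g‖) :=
    ⟨0, Set.forall_mem_range.2 fun _ => norm_nonneg _⟩
  exact (ciInf_le hbdd ⟨l, hl⟩).trans hfg

/-- The factor `2` matches the averages `(f s + f t) / 2` and `(f s + i f t) / 2`. -/
def PairwiseModulusClose {L : Type*} (f g : L → ℂ) (δ : ℝ) : Prop :=
  ∀ s t, |‖f s + f t‖ - ‖g s + g t‖| ≤ 2 * δ ∧ |‖f s + I * f t‖ - ‖g s + I * g t‖| ≤ 2 * δ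

namespace PairwiseModulusClose

variable {L : Type*} {δ : ℝ}

lemma symm {f g : L → ℂ} (h : PairwiseModulusClose f g δ) : PairwiseModulusClose g f δ :=
  fun s t => by simpa only [abs_sub_comm] using h s t

lemma abs_norm_sub_norm_le {f g : L → ℂ} (h : PairwiseModulusClose f g δ) (s : L) :
    |‖f s‖ - ‖g s‖| ≤ δ := by
  have := (h s s).1
  rw [← two_mul, ← two_mul, norm_mul, norm_mul, RCLike.norm_two, ← mul_sub, abs_mul,
    abs_two] at this
  linarith

lemma norm_mul_conj_sub_le {f g : L → ℂ} {M : ℝ} (h : PairwiseModulusClose f g δ)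
    (hf : ∀ s, ‖f s‖ ≤ M) (hg : ∀ s, ‖g s‖ ≤ M) (s t : L) :
    ‖f t * conj (f s) - g t * conj (g s)‖ ≤ 12 * M * δ :=
  norm_mul_conj_sub_mul_conj_le (hf t) (hf s) (hg t) (hg s) (h.abs_norm_sub_norm_le t)
    (h.abs_norm_sub_norm_le s) (h t s).1 (h t s).2

variable [TopologicalSpace L] [CompactSpace L]

theorem exists_norm_sub_smul_le_of_norm_le {f g : C(L, ℂ)} (h : PairwiseModulusClose f g δ)
    (hδ : 0 ≤ δ) (hgf : ‖g‖ ≤ ‖f‖) : ∃ l : ℂ, ‖l‖ = 1 ∧ ‖f - l • g‖ ≤ 13 * δ := by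
  rcases eq_or_ne f 0 with rfl | hf0
  · refine ⟨1, norm_one, ?_⟩
    rw [norm_zero, norm_le_zero_iff] at hgf
    simp [hgf, hδ]
  obtain ⟨s, -⟩ : ∃ s, f s ≠ 0 := by
    by_contra! hf; exact hf0 (ContinuousMap.ext hf)
  have : Nonempty L := ⟨s⟩
  obtain ⟨s₀, hs₀⟩ := f.exists_norm_apply_eq_norm
  have hM : 0 < ‖f‖ := norm_pos_iff.mpr hf0
  have hfM : ∀ s, ‖f s‖ ≤ ‖f‖ := f.norm_coe_le_norm
  have hgM : ∀ s, ‖g s‖ ≤ ‖f‖ := fun s => (g.norm_coe_le_norm s).trans hgf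
  obtain ⟨l, hl, hphase⟩ := RCLike.exists_norm_eq_one_norm_mul_sub_eq (conj (f s₀)) (conj (g s₀))
  rw [RCLike.norm_conj, RCLike.norm_conj] at hphase
  refine ⟨l, hl, (ContinuousMap.norm_le _ (by positivity)).mpr fun t => ?_⟩
  rw [ContinuousMap.sub_apply, ContinuousMap.smul_apply, smul_eq_mul]
  refine le_of_mul_le_mul_right ?_ hM
  calc ‖f t - l * g t‖ * ‖f‖
      = ‖(f t * conj (f s₀) - g t * conj (g s₀)) - g t * (l * conj (f s₀) - conj (g s₀))‖ := by
        rw [← hs₀, ← norm_conj (f s₀), ← norm_mul]; congr 1; ring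
    _ ≤ 12 * ‖f‖ * δ + ‖f‖ * δ := by
        refine (norm_sub_le _ _).trans (add_le_add (h.norm_mul_conj_sub_le hfM hgM s₀ t) ?_)
        rw [norm_mul, hphase]
        exact mul_le_mul (hgM t) (h.abs_norm_sub_norm_le s₀) (abs_nonneg _) hM.le
    _ = 13 * δ * ‖f‖ := by ring

theorem exists_norm_sub_smul_le {f g : C(L, ℂ)} (h : PairwiseModulusClose f g δ) (hδ : 0 ≤ δ) :
    ∃ l : ℂ, ‖l‖ = 1 ∧ ‖f - l • g‖ ≤ 13 * δ := by
  rcases le_total ‖g‖ ‖f‖ with hgf | hfg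
  · exact h.exists_norm_sub_smul_le_of_norm_le hδ hgf
  obtain ⟨l, hl, hgl⟩ := h.symm.exists_norm_sub_smul_le_of_norm_le hδ hfg
  have hl0 : l ≠ 0 := norm_ne_zero_iff.mp (by rw [hl]; exact one_ne_zero)
  refine ⟨l⁻¹, by rw [norm_inv, hl, inv_one], ?_⟩
  rwa [← inv_smul_smul₀ hl0 f, ← smul_sub, norm_smul, norm_inv, hl, inv_one, one_mul,
    norm_sub_rev]

end PairwiseModulusClose

section Operator

variable {K L : Type*} [TopologicalSpace K] [CompactSpace K] [TopologicalSpace L]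

lemma abs_norm_sub_norm_le_norm_cmAbs_sub {𝕜 : Type*} [RCLike 𝕜] (f g : C(K, 𝕜)) (x : K) :
    |‖f x‖ - ‖g x‖| ≤ ‖cmAbs f - cmAbs g‖ :=
  (cmAbs f - cmAbs g).norm_coe_le_norm x

theorem ContinuousLinearMap.norm_map_eq_of_forall_exists_eval [CompactSpace L]
    {𝕜 : Type*} [RCLike 𝕜]
    {T : C(L, 𝕜) →L[𝕜] C(K, 𝕜)} (hT : ‖T‖ ≤ 1) (heval : ∀ s, ∃ r, ∀ f, T f r = f s)
    (f : C(L, 𝕜)) : ‖T f‖ = ‖f‖ := by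
  refine le_antisymm (T.le_of_opNorm_le hT f |>.trans_eq (one_mul _))
    ((f.norm_le (norm_nonneg _)).mpr fun s => ?_)
  obtain ⟨r, hr⟩ := heval s
  exact hr f ▸ (T f).norm_coe_le_norm r

theorem pairwiseModulusClose_of_forall_exists {T : C(L, ℂ) →L[ℂ] C(K, ℂ)}
    (hover : ∀ s t : L, ∃ r r' : K,
      (∀ f : C(L, ℂ), T f r = (f s + f t) / 2) ∧
      (∀ f : C(L, ℂ), T f r' = (f s + I * f t) / 2)) (f g : C(L, ℂ)) :
    PairwiseModulusClose f g ‖cmAbs (T f) - cmAbs (T g)‖ := by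
  have halves : ∀ x u v, T f x = u / 2 → T g x = v / 2 →
      |‖u‖ - ‖v‖| ≤ 2 * ‖cmAbs (T f) - cmAbs (T g)‖ := by
    intro x u v hu hv
    have := abs_norm_sub_norm_le_norm_cmAbs_sub (T f) (T g) x
    rw [hu, hv, norm_div, norm_div, RCLike.norm_two, ← sub_div, abs_div, abs_two,
      div_le_iff₀ two_pos] at this
    linarith
  intro s t
  obtain ⟨r, r', hr, hr'⟩ := hover s t
  exact ⟨halves r _ _ (hr f) (hr g), halves r' _ _ (hr' f) (hr' g)⟩

end Operator

theorem overlap_implies_complex_SPR_general {K L : Type*}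
    [TopologicalSpace K] [CompactSpace K]
    [TopologicalSpace L] [CompactSpace L]
    (T : C(L, ℂ) →L[ℂ] C(K, ℂ)) (hT : ‖T‖ ≤ 1)
    (hover : ∀ s t : L, ∃ r r' : K,
      (∀ f : C(L, ℂ), T f r = (f s + f t) / 2) ∧
      (∀ f : C(L, ℂ), T f r' = (f s + Complex.I * f t) / 2)) :
    (∀ f : C(L, ℂ), ‖T f‖ = ‖f‖) ∧
    DoesSPR (LinearMap.range (T : C(L, ℂ) →ₗ[ℂ] C(K, ℂ))) := by
  have hiso : ∀ f, ‖T f‖ = ‖f‖ := T.norm_map_eq_of_forall_exists_eval hT fun s => by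
    obtain ⟨r, -, hr, -⟩ := hover s s
    exact ⟨r, fun f => by rw [hr f, ← two_mul, mul_div_cancel_left₀ _ two_ne_zero]⟩
  refine ⟨hiso, 13, by norm_num, ?_⟩
  rintro _ ⟨f, rfl⟩ _ ⟨g, rfl⟩
  obtain ⟨l, hl, hfg⟩ :=
    (pairwiseModulusClose_of_forall_exists hover f g).exists_norm_sub_smul_le (norm_nonneg _)
  refine sprInf_le_of_norm_sub_smul_le hl ?_
  rwa [ContinuousLinearMap.coe_coe, ← map_smul, ← map_sub, hiso]

/-- Let `K, L` be compact Hausdorff spaces (complex scalars) and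
`T : C(L) → C(K)` a contraction such that for every `(s, t) ∈ L × L` there are points
`r, r' ∈ K` with `Tf r = (f s + f t) / 2` and `Tf r' = (f s + i f t) / 2` for all `f`.
Then `T` is an isometric embedding and its range does SPR. -/
theorem overlap_implies_complex_SPR {K L : Type*}
    [TopologicalSpace K] [CompactSpace K] [T2Space K]
    [TopologicalSpace L] [CompactSpace L] [T2Space L]
    (T : C(L, ℂ) →L[ℂ] C(K, ℂ)) (hT : ‖T‖ ≤ 1)
    (hover : ∀ s t : L, ∃ r r' : K,
      (∀ f : C(L, ℂ), T f r = (f s + f t) / 2) ∧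
      (∀ f : C(L, ℂ), T f r' = (f s + Complex.I * f t) / 2)) :
    (∀ f : C(L, ℂ), ‖T f‖ = ‖f‖) ∧
    DoesSPR (LinearMap.range (T : C(L, ℂ) →ₗ[ℂ] C(K, ℂ))) :=
  overlap_implies_complex_SPR_general T hT hover
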